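/- Let L : ℝᵐ × ℝⁿ → ℝ be C² and fix x, θ with g := ∇ₓL(x,θ) ≠ 0. Let F : ℝⁿ → ℝⁿ be any map and suppose the bilinear form B := D²_{xθ}L(x,θ) satisfies ⟨B(F(θ)), g⟩ > 0. Then there exist α₀, β₀ > 0 such that for all α ∈ (0, α₀) and β ∈ (0, β₀) with β sufficiently small relative to α, L(x + β∇ₓL(x, θ + αF(θ)), θ) > L(x + βg, θ) + (1/2)βα⟨B(F(θ)), g⟩. -/

import Mathlib

/-!
Write `G θ' = ∇ₓL(x, θ')`, so that `G θ = g` and `B = DG(θ)`. The map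
`α ↦ ⟪g, G (θ + α • F θ)⟫` has derivative `⟪B (F θ), g⟫ > 0` at `0`, so for small `α > 0` the
new gradient `gα = G (θ + α • F θ)` satisfies `⟪g, gα⟫ - ⟪g, g⟫ > α ⟪B (F θ), g⟫ / 2`. For fixed
`α`, the difference `β ↦ L (x + β • gα, θ) - L (x + β • g, θ)` vanishes at `0` with derivative
`⟪g, gα⟫ - ⟪g, g⟫` there, hence exceeds `β α ⟪B (F θ), g⟫ / 2` for small `β > 0`.
-/

open Set RealInnerProductSpace Topology

theorem HasDerivAt.exists_forall_Ioo_mul_lt_sub {f : ℝ → ℝ} {f' t a : ℝ}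
    (hf : HasDerivAt f f' a) (ht : t < f') :
    ∃ ε > 0, ∀ s ∈ Ioo 0 ε, t * s < f (a + s) - f a := by
  have hslope : ∀ᶠ s in 𝓝[>] (0 : ℝ), t < s⁻¹ * (f (a + s) - f a) :=
    ((hasDerivAt_iff_tendsto_slope_zero.mp hf).mono_left
      (nhdsWithin_mono _ fun _ hs => ne_of_gt hs)).eventually (eventually_gt_nhds ht)
  obtain ⟨ε, hε, hsub⟩ := mem_nhdsGT_iff_exists_Ioo_subset.mp hslope
  exact ⟨ε, hε, fun s hs => (lt_inv_mul_iff₀' hs.1).mp (hsub hs)⟩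

theorem ContDiff.differentiableAt_gradient_fst {E F : Type*} [NormedAddCommGroup E]
    [InnerProductSpace ℝ E] [CompleteSpace E] [NormedAddCommGroup F] [NormedSpace ℝ F]
    {L : E × F → ℝ} (hL : ContDiff ℝ 2 L) (x : E) (y : F) :
    DifferentiableAt ℝ (fun y' => gradient (fun x' => L (x', y')) x) y := by
  have hgrad : (fun y' => gradient (fun x' => L (x', y')) x) =
      fun y' => (InnerProductSpace.toDual ℝ E).symm
        ((fderiv ℝ L (x, y')).comp (ContinuousLinearMap.inl ℝ E F)) := by
    funext y'
    exact congrArg _ ((hL.differentiable two_ne_zero (x, y')).hasFDerivAt.comp x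
      (hasFDerivAt_prodMk_left x y')).fderiv
  have hfderiv : Differentiable ℝ (fderiv ℝ L) :=
    (hL.fderiv_right (m := 1) le_rfl).differentiable one_ne_zero
  rw [hgrad]
  exact (InnerProductSpace.toDual ℝ E).symm.differentiable.differentiableAt.comp y
    ((hfderiv.comp (by fun_prop)).differentiableAt.clm_comp (differentiableAt_const _))

theorem stmt12_general (m n : ℕ)
    (L : EuclideanSpace ℝ (Fin m) × EuclideanSpace ℝ (Fin n) → ℝ)
    (hL : ContDiff ℝ 2 L)
    (x : EuclideanSpace ℝ (Fin m)) (θ : EuclideanSpace ℝ (Fin n))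
    (g : EuclideanSpace ℝ (Fin m))
    (hg : g = gradient (fun x' => L (x', θ)) x)
    (F : EuclideanSpace ℝ (Fin n) → EuclideanSpace ℝ (Fin n))
    (B : EuclideanSpace ℝ (Fin n) → EuclideanSpace ℝ (Fin m))
    (hB : B = fderiv ℝ (fun θ' => gradient (fun x' => L (x', θ')) x) θ)
    (hpos : 0 < ⟪B (F θ), g⟫) :
    ∃ α₀ > 0, ∀ α ∈ Ioo (0 : ℝ) α₀, ∃ β₀ > 0, ∀ β ∈ Ioo (0 : ℝ) β₀,
      L (x + β • gradient (fun x' => L (x', θ + α • F θ)) x, θ)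
        > L (x + β • g, θ) + (1 / 2) * β * α * ⟪B (F θ), g⟫ := by
  set G := fun θ' => gradient (fun x' => L (x', θ')) x
  have hG : HasLineDerivAt ℝ G (B (F θ)) θ (F θ) := by
    rw [hB]
    exact (hL.differentiableAt_gradient_fst x θ).hasFDerivAt.hasLineDerivAt (F θ)
  have hGg : HasDerivAt (fun α : ℝ => ⟪g, G (θ + α • F θ)⟫) ⟪B (F θ), g⟫ 0 := by
    simpa [real_inner_comm] using (hasDerivAt_const (0 : ℝ) g).inner ℝ hG
  obtain ⟨α₀, hα₀, hαstep⟩ := hGg.exists_forall_Ioo_mul_lt_sub (half_lt_self hpos)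
  refine ⟨α₀, hα₀, fun α hα => ?_⟩
  have hLx : HasGradientAt (fun x' => L (x', θ)) g x := by
    rw [hg]
    exact ((hL.differentiable two_ne_zero).comp (by fun_prop) x).hasGradientAt
  have hline (v : EuclideanSpace ℝ (Fin m)) :
      HasLineDerivAt ℝ (fun x' => L (x', θ)) ⟪g, v⟫ x v := by
    simpa using hLx.hasFDerivAt.hasLineDerivAt v
  have hgain : ⟪B (F θ), g⟫ / 2 * α < ⟪g, G (θ + α • F θ)⟫ - ⟪g, g⟫ := by
    simpa [G, ← hg] using hαstep α hα
  obtain ⟨β₀, hβ₀, hβstep⟩ :=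
    ((hline (G (θ + α • F θ))).sub (hline g)).exists_forall_Ioo_mul_lt_sub hgain
  refine ⟨β₀, hβ₀, fun β hβ => ?_⟩
  have hstep := hβstep β hβ
  simp only [Pi.sub_apply, zero_add, zero_smul, add_zero, sub_self, sub_zero, G] at hstep
  linarith

/-- Let `L : ℝᵐ × ℝⁿ → ℝ` be C², fix `x, θ` with
`g := ∇ₓL(x,θ) ≠ 0`. Let `F : ℝⁿ → ℝⁿ` and suppose the mixed second derivative
`B := D²_{xθ}L(x,θ)` (the derivative in `θ` of `θ' ↦ ∇ₓL(x,θ')`) satisfies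
`⟨B(F(θ)), g⟩ > 0`. Then there exists `α₀ > 0` such that for every
`α ∈ (0, α₀)` there exists `β₀ > 0` (i.e. `β` sufficiently small relative to `α`)
such that for all `β ∈ (0, β₀)`,
`L(x + β∇ₓL(x, θ + αF(θ)), θ) > L(x + βg, θ) + (1/2)βα⟨B(F(θ)), g⟩`. -/
theorem stmt12 (m n : ℕ)
    (L : EuclideanSpace ℝ (Fin m) × EuclideanSpace ℝ (Fin n) → ℝ)
    (hL : ContDiff ℝ 2 L)
    (x : EuclideanSpace ℝ (Fin m)) (θ : EuclideanSpace ℝ (Fin n))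
    (g : EuclideanSpace ℝ (Fin m))
    (hg : g = gradient (fun x' => L (x', θ)) x) (hg0 : g ≠ 0)
    (F : EuclideanSpace ℝ (Fin n) → EuclideanSpace ℝ (Fin n))
    (B : EuclideanSpace ℝ (Fin n) → EuclideanSpace ℝ (Fin m))
    (hB : B = fderiv ℝ (fun θ' => gradient (fun x' => L (x', θ')) x) θ)
    (hpos : 0 < ⟪B (F θ), g⟫) :
    ∃ α₀ > 0, ∀ α ∈ Ioo (0 : ℝ) α₀, ∃ β₀ > 0, ∀ β ∈ Ioo (0 : ℝ) β₀,
      L (x + β • gradient (fun x' => L (x', θ + α • F θ)) x, θ)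
        > L (x + β • g, θ) + (1 / 2) * β * α * ⟪B (F θ), g⟫ :=
  stmt12_general m n L hL x θ g hg F B hB hpos
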